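/- Existence of classical splits: Given a probability distribution P_A on a finite totally ordered set 𝒜, there exist families of distributions P_U^θ and P_V^θ on 𝒜 parameterized by θ ∈ [0,1] and a function f : 𝒜 × 𝒜 → 𝒜 such that: (1) if U ~ P_U^θ and V ~ P_V^θ are independent then f(U,V) ~ P_A; (2) for each fixed a and u, the conditional probability P^θ_{f(U,V)|U}(a|u) is a continuous function of θ; (3) at θ = 0, P^θ_{f(U,V)|U}(a|u) = P_A(a); (4) at θ = 1, for every u ∈ 𝒜 the conditional distribution P^θ_{f(U,V)|U}(·|u) puts all its mass on one element. In particular the explicit choice F_U^θ(i) := θ F_A(i) + 1 − θ, F_V^θ(i) := F_A(i)/F_U^θ(i), f(u,v) := max{u,v} has these properties. -/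

import Mathlib

noncomputable section
open scoped BigOperators
open MeasureTheory Kronecker Matrix
open scoped ComplexOrder
attribute [local instance] Classical.propDecidable

namespace QIT

variable {ι κ : Type*}

/-- A measurable-space structure on matrices, coming from the product σ-algebra. -/
instance matMeasurableSpace (m n : Type*) : MeasurableSpace (Matrix m n ℂ) :=
  (inferInstance : MeasurableSpace (m → n → ℂ))

/-- Unit vector predicate. -/
def UnitVec {ι : Type*} [Fintype ι] (v : ι → ℂ) : Prop :=
  ∑ i, Complex.normSq (v i) = 1

/-- The pure state (rank-one projector) associated to a vector. -/
def pureState {ι : Type*} (v : ι → ℂ) : Matrix ι ι ℂ :=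
  Matrix.vecMulVec v (star v)

/-- Schatten 1-norm (trace norm) of a complex square matrix, via singular values. -/
def traceNorm [Fintype ι] [DecidableEq ι] (M : Matrix ι ι ℂ) : ℝ :=
  ∑ i, Real.sqrt ((Matrix.isHermitian_conjTranspose_mul_self M).eigenvalues i)

/-- Square root of a positive semidefinite matrix (junk value `0` otherwise). -/
def psqrt [Fintype ι] [DecidableEq ι] (M : Matrix ι ι ℂ) : Matrix ι ι ℂ :=
  if h : M.PosSemidef then
    h.1.eigenvectorUnitary.1 * Matrix.diagonal ((↑) ∘ (Real.sqrt ∘ h.1.eigenvalues)) *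
      (star h.1.eigenvectorUnitary : Matrix ι ι ℂ) else 0

/-- Generalised fidelity of two (sub)normalised states. -/
def gFid [Fintype ι] [DecidableEq ι] (ρ σ : Matrix ι ι ℂ) : ℝ :=
  traceNorm (psqrt ρ * psqrt σ) +
    Real.sqrt ((1 - ρ.trace.re) * (1 - σ.trace.re))

/-- Purified distance. -/
def pDist [Fintype ι] [DecidableEq ι] (ρ σ : Matrix ι ι ℂ) : ℝ :=
  Real.sqrt (1 - gFid ρ σ ^ 2)

/-- Purified distance between two pure states given by vectors. -/
def pureDist {ι : Type*} [Fintype ι] (v w : ι → ℂ) : ℝ :=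
  Real.sqrt (1 - ‖∑ i, (starRingEnd ℂ) (v i) * w i‖ ^ 2)

/-- Subnormalised density operator. -/
def IsSubState [Fintype ι] (ρ : Matrix ι ι ℂ) : Prop :=
  ρ.PosSemidef ∧ ρ.trace.re ≤ 1

/-- Normalised density operator. -/
def IsState [Fintype ι] (ρ : Matrix ι ι ℂ) : Prop :=
  ρ.PosSemidef ∧ ρ.trace = 1

/-- ε-smooth conditional min-entropy `H_min^ε(A|B)_ρ` of a bipartite (sub)state,
conditioning on the second tensor factor.  Logarithms are base 2. -/
def Hmin {α β : Type*} [Fintype α] [DecidableEq α] [Fintype β] [DecidableEq β]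
    (ε : ℝ) (ρ : Matrix (α × β) (α × β) ℂ) : ℝ :=
  - Real.logb 2 (sInf {t : ℝ | ∃ ρ' : Matrix (α × β) (α × β) ℂ, ∃ σ : Matrix β β ℂ,
      IsSubState ρ' ∧ pDist ρ' ρ ≤ ε ∧ σ.PosSemidef ∧
      ((1 : Matrix α α ℂ) ⊗ₖ σ - ρ').PosSemidef ∧ t = σ.trace.re})

/-- Unconditional smooth min-entropy (one-dimensional conditioning system). -/
def Hmin0 {α : Type*} [Fintype α] [DecidableEq α] (ε : ℝ) (ρ : Matrix α α ℂ) : ℝ :=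
  Hmin ε (ρ.submatrix (fun p : α × Unit => p.1) (fun p : α × Unit => p.1))

/-- Canonical purification vector of a matrix (meaningful for PSD matrices). -/
def purifyVec [Fintype ι] [DecidableEq ι] (ρ : Matrix ι ι ℂ) : ι × ι → ℂ :=
  fun p => psqrt ρ p.1 p.2

/-- Reduced density matrix of a pure state `v` on a system relabelled by `f : kept × traced → full`. -/
def marg {F K T : Type*} [Fintype T] (f : K × T → F) (v : F → ℂ) : Matrix K K ℂ :=
  Matrix.of fun k k' => ∑ t, v (f (k, t)) * (starRingEnd ℂ) (v (f (k', t)))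

/-- Reduced density matrix of a mixed state `M` under the relabelling `f : kept × traced → full`. -/
def margM {F K T : Type*} [Fintype T] (f : K × T → F) (M : Matrix F F ℂ) : Matrix K K ℂ :=
  Matrix.of fun k k' => ∑ t, M (f (k, t)) (f (k', t))

/-- Partial trace over the first tensor factor. -/
def ptraceFst {T K : Type*} [Fintype T] (M : Matrix (T × K) (T × K) ℂ) : Matrix K K ℂ :=
  Matrix.of fun k k' => ∑ t, M (t, k) (t, k')

/-- Partial trace over the second tensor factor. -/
def ptraceSnd {K T : Type*} [Fintype T] (M : Matrix (K × T) (K × T) ℂ) : Matrix K K ℂ :=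
  Matrix.of fun k k' => ∑ t, M (k, t) (k', t)

/-- ε-smooth max-entropy `H_max^ε(A)_ρ := −H_min^ε(A|E)` of (a purification of) `ρ`. -/
def Hmax {α : Type*} [Fintype α] [DecidableEq α] (ε : ℝ) (ρ : Matrix α α ℂ) : ℝ :=
  - Hmin ε (pureState (purifyVec ρ))

/-- ε-smooth coherent min-information `I_min^ε(A>B)_ρ := H_min^ε(A|E)` evaluated on
(the A,E marginal of) a purification of `ρ^{AB}`. -/
def Imin {α β : Type*} [Fintype α] [DecidableEq α] [Fintype β] [DecidableEq β]
    (ε : ℝ) (ρ : Matrix (α × β) (α × β) ℂ) : ℝ :=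
  Hmin ε (marg (fun q : (α × (α × β)) × β => ((q.1.1, q.2), q.1.2)) (purifyVec ρ))

/-- Frobenius (Schatten 2-) norm. -/
def frobNorm {ι : Type*} [Fintype ι] (M : Matrix ι ι ℂ) : ℝ :=
  Real.sqrt (∑ i, ∑ j, ‖M i j‖ ^ 2)

/-- Real power of a Hermitian matrix through its spectral decomposition
(junk value `0` for non-Hermitian input). -/
def rpowMat [Fintype ι] [DecidableEq ι] (σ : Matrix ι ι ℂ) (r : ℝ) : Matrix ι ι ℂ :=
  if h : σ.IsHermitian then
    (h.eigenvectorUnitary : Matrix ι ι ℂ) *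
      Matrix.diagonal (fun i => ((h.eigenvalues i ^ r : ℝ) : ℂ)) *
      (h.eigenvectorUnitary : Matrix ι ι ℂ)ᴴ
  else 0

/-- ε-smooth sandwiched Rényi-2 conditional entropy `H₂^ε(A|B)_ρ`, conditioning on the
second factor. -/
def H2 {α β : Type*} [Fintype α] [DecidableEq α] [Fintype β] [DecidableEq β]
    (ε : ℝ) (ρ : Matrix (α × β) (α × β) ℂ) : ℝ :=
  -2 * Real.logb 2 (sInf {t : ℝ | ∃ ρ' : Matrix (α × β) (α × β) ℂ, ∃ σ : Matrix β β ℂ,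
      IsSubState ρ' ∧ pDist ρ' ρ ≤ ε ∧ σ.PosDef ∧ σ.trace = 1 ∧
      t = frobNorm (((1 : Matrix α α ℂ) ⊗ₖ rpowMat σ (-(1/4 : ℝ))) * ρ' *
        ((1 : Matrix α α ℂ) ⊗ₖ rpowMat σ (-(1/4 : ℝ))))})

/-- Unconditional smooth sandwiched Rényi-2 entropy. -/
def H20 {α : Type*} [Fintype α] [DecidableEq α] (ε : ℝ) (ρ : Matrix α α ℂ) : ℝ :=
  H2 ε (ρ.submatrix (fun p : α × Unit => p.1) (fun p : α × Unit => p.1))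

/-- `op^{X→Y}` : reinterpret a vector on `X ⊗ Y` as an operator from `X` to `Y`. -/
def opMat {X Y : Type*} (v : X × Y → ℂ) : Matrix Y X ℂ :=
  Matrix.of fun y x => v (x, y)

/-- Apply an operator on the first tensor factor of a vector. -/
def applyLeft {X Y R : Type*} [Fintype X] (M : Matrix Y X ℂ) (w : X × R → ℂ) : Y × R → ℂ :=
  fun p => ∑ x, M p.1 x * w (x, p.2)

/-- Linearity of a superoperator. -/
def IsLin (Φ : Matrix ι ι ℂ → Matrix κ κ ℂ) : Prop :=
  ∀ (c : ℂ) (M N : Matrix ι ι ℂ), Φ (c • M + N) = c • Φ M + Φ N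

/-- Tensor extension `Φ ⊗ id_R` of a superoperator, acting on the first factor. -/
def extAncilla (Φ : Matrix ι ι ℂ → Matrix κ κ ℂ) {R : Type*}
    (M : Matrix (ι × R) (ι × R) ℂ) : Matrix (κ × R) (κ × R) ℂ :=
  Matrix.of fun x y => Φ (Matrix.of fun a b => M (a, x.2) (b, y.2)) x.1 y.1

/-- Complete positivity. -/
def IsCP [Fintype ι] [Fintype κ] (Φ : Matrix ι ι ℂ → Matrix κ κ ℂ) : Prop :=
  ∀ (R : Type) [Fintype R], ∀ M : Matrix (ι × R) (ι × R) ℂ,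
    M.PosSemidef → (extAncilla Φ M).PosSemidef

/-- Trace preservation. -/
def IsTP [Fintype ι] [Fintype κ] (Φ : Matrix ι ι ℂ → Matrix κ κ ℂ) : Prop :=
  ∀ M : Matrix ι ι ℂ, (Φ M).trace = M.trace

/-- Quantum channel: linear, completely positive, trace preserving. -/
def IsCPTP [Fintype ι] [Fintype κ] (Φ : Matrix ι ι ℂ → Matrix κ κ ℂ) : Prop :=
  IsLin Φ ∧ IsCP Φ ∧ IsTP Φ

/-- `V` is a Stinespring dilation (with environment `E`) of the superoperator `Φ`. -/
def IsStinespring {E : Type*} [Fintype ι] [DecidableEq ι] [Fintype κ] [Fintype E]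
    (Φ : Matrix ι ι ℂ → Matrix κ κ ℂ) (V : Matrix (κ × E) ι ℂ) : Prop :=
  Vᴴ * V = 1 ∧ ∀ M : Matrix ι ι ℂ, Φ M = ptraceSnd (V * M * Vᴴ)

/-- von Neumann entropy (base 2). -/
def vN [Fintype ι] [DecidableEq ι] (ρ : Matrix ι ι ℂ) : ℝ :=
  if h : ρ.IsHermitian then -∑ i, (h.eigenvalues i) * Real.logb 2 (h.eigenvalues i) else 0

/-- Coherent information `I(A>B)_ρ = H(B) − H(AB)` of a bipartite state. -/
def cohInfo {α β : Type*} [Fintype α] [DecidableEq α] [Fintype β] [DecidableEq β]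
    (ρ : Matrix (α × β) (α × β) ℂ) : ℝ :=
  vN (ptraceFst ρ) - vN ρ

/-- (Left- and right-) invariant probability measure on the unitary group, i.e.,
the Haar probability measure. -/
def IsHaarLike {ι : Type*} [Fintype ι] [DecidableEq ι]
    (μ : Measure ↥(Matrix.unitaryGroup ι ℂ)) : Prop :=
  (∀ V : ↥(Matrix.unitaryGroup ι ℂ), Measure.map (fun U => V * U) μ = μ) ∧
  (∀ V : ↥(Matrix.unitaryGroup ι ℂ), Measure.map (fun U => U * V) μ = μ)

/-- Maximally entangled (EPR) vector of rank `m`. -/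
def mevec (m : ℕ) : Fin m × Fin m → ℂ :=
  fun p => if p.1 = p.2 then ((1 / Real.sqrt m : ℝ) : ℂ) else 0

/-- Maximally mixed state. -/
def mms (ι : Type*) [Fintype ι] [DecidableEq ι] : Matrix ι ι ℂ :=
  ((Fintype.card ι : ℂ)⁻¹) • (1 : Matrix ι ι ℂ)

end QIT

namespace QIT

/-- Cumulative distribution function `F_P(i) = Σ_{j ≤ i} P(j)` on a finite ordered set. -/
def cdf {α : Type*} [Fintype α] [LinearOrder α] (P : α → ℝ) (i : α) : ℝ :=
  ∑ j ∈ Finset.univ.filter (fun j => j ≤ i), P j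

/-- Strict cumulative distribution function `F_P(i−1) = Σ_{j < i} P(j)`. -/
def cdfLt {α : Type*} [Fintype α] [LinearOrder α] (P : α → ℝ) (i : α) : ℝ :=
  ∑ j ∈ Finset.univ.filter (fun j => j < i), P j

/-- A probability mass function on a finite set. -/
def IsPMF {α : Type*} [Fintype α] (P : α → ℝ) : Prop :=
  (∀ i, 0 ≤ P i) ∧ ∑ i, P i = 1

/-- The first split distribution `P_U^θ`, the pmf with cdf `F_U^θ(i) = θ F_A(i) + 1 − θ`. -/
def splitU {α : Type*} [Fintype α] [LinearOrder α] [OrderBot α]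
    (P : α → ℝ) (θ : ℝ) (i : α) : ℝ :=
  θ * P i + (if i = ⊥ then 1 - θ else 0)

/-- The second split distribution `P_V^θ`, the pmf with cdf `F_V^θ(i) = F_A(i)/F_U^θ(i)`. -/
def splitV {α : Type*} [Fintype α] [LinearOrder α] (P : α → ℝ) (θ : ℝ) (i : α) : ℝ :=
  cdf P i / (θ * cdf P i + 1 - θ) - cdfLt P i / (θ * cdfLt P i + 1 - θ)

end QIT

/-!
With `f = max`, independence gives `P(max(U,V) ≤ a) = F_U(a) F_V(a) = F_A(a)` (and likewise
with `< a`), so `max(U,V) ∼ P_A`. The law of `V` is obtained by telescoping `F_V`, and is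
continuous in `θ` because `θ F_A + 1 − θ > 0` whenever `F_A > 0`. At `θ = 0` we have `U = ⊥`
and `V ∼ P_A`; at `θ = 1` we have `F_V(i) = 1` as soon as `F_A(i) > 0`, so `V` is the
deterministic least point of the support of `P_A`, and then so is `max(u,V)`.
-/

namespace QIT

section Cdf

variable {α : Type*} [Fintype α] [LinearOrder α]

theorem cdf_eq_cdfLt_add (Q : α → ℝ) (a : α) : cdf Q a = cdfLt Q a + Q a := by
  have h : Finset.univ.filter (· ≤ a) = insert a (Finset.univ.filter (· < a)) := by
    ext j; simp [le_iff_lt_or_eq, or_comm]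
  rw [cdf, cdfLt, h, Finset.sum_insert (by simp), add_comm]

theorem cdfLt_eq_cdf_of_covBy (Q : α → ℝ) {m a : α} (h : m ⋖ a) : cdfLt Q a = cdf Q m := by
  simp only [cdfLt, cdf, covBy_iff_lt_iff_le_left.mp h]

theorem cdfLt_of_isMin (Q : α → ℝ) {a : α} (ha : IsMin a) : cdfLt Q a = 0 := by
  simp [cdfLt, ha.not_lt]

theorem cdf_of_forall_le (Q : α → ℝ) {t : α} (ht : ∀ j, j ≤ t) : cdf Q t = ∑ i, Q i := by
  simp [cdf, ht]

theorem cdfLt_nonneg {Q : α → ℝ} (hQ : ∀ i, 0 ≤ Q i) (a : α) : 0 ≤ cdfLt Q a :=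
  Finset.sum_nonneg fun j _ => hQ j

theorem cdf_nonneg {Q : α → ℝ} (hQ : ∀ i, 0 ≤ Q i) (a : α) : 0 ≤ cdf Q a :=
  Finset.sum_nonneg fun j _ => hQ j

theorem cdfLt_le_cdf {Q : α → ℝ} (hQ : ∀ i, 0 ≤ Q i) (a : α) : cdfLt Q a ≤ cdf Q a := by
  rw [cdf_eq_cdfLt_add]; linarith [hQ a]

theorem cdfLt_comp_sub (Q : α → ℝ) (H : ℝ → ℝ) (hH : H 0 = 0) (a : α) :
    cdfLt (fun i => H (cdf Q i) - H (cdfLt Q i)) a = H (cdfLt Q a) := by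
  induction a using WellFoundedLT.induction with
  | _ a ih =>
    by_cases ha : IsMin a
    · rw [cdfLt_of_isMin _ ha, cdfLt_of_isMin _ ha, hH]
    · obtain ⟨b, hba⟩ := not_isMin_iff.mp ha
      obtain ⟨m, -, hm⟩ := exists_le_covBy_of_lt hba
      rw [cdfLt_eq_cdf_of_covBy _ hm, cdfLt_eq_cdf_of_covBy _ hm, cdf_eq_cdfLt_add, ih m hm.lt]
      ring

theorem cdf_comp_sub (Q : α → ℝ) (H : ℝ → ℝ) (hH : H 0 = 0) (a : α) :
    cdf (fun i => H (cdf Q i) - H (cdfLt Q i)) a = H (cdf Q a) := by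
  rw [cdf_eq_cdfLt_add, cdfLt_comp_sub Q H hH]
  ring

theorem sum_ite_max_eq (f g : α → ℝ) (a : α) :
    (∑ p : α × α, if max p.1 p.2 = a then f p.1 * g p.2 else 0)
      = cdf f a * cdf g a - cdfLt f a * cdfLt g a := by
  simp only [cdf, cdfLt, Finset.sum_filter, Finset.sum_mul_sum, ← Finset.sum_sub_distrib,
    Fintype.sum_prod_type]
  refine Finset.sum_congr rfl fun u _ => Finset.sum_congr rfl fun v _ => ?_
  split_ifs <;> grind

end Cdf

section SplitRatio

/-- `F_V = F_A / F_U` written as a function of the value `c = F_A(i)`. -/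
def splitRatio (θ c : ℝ) : ℝ := c / (θ * c + 1 - θ)

variable {θ c : ℝ}

@[simp] theorem splitRatio_zero_right (θ : ℝ) : splitRatio θ 0 = 0 := by simp [splitRatio]

@[simp] theorem splitRatio_zero_left (c : ℝ) : splitRatio 0 c = c := by simp [splitRatio]

@[simp] theorem splitRatio_one_right (θ : ℝ) : splitRatio θ 1 = 1 := by simp [splitRatio]

theorem splitRatio_one_left (hc : c ≠ 0) : splitRatio 1 c = 1 := by simp [splitRatio, hc]

theorem mul_add_one_sub_pos (hθ : θ ∈ Set.Icc (0 : ℝ) 1) (hc : 0 < c) : 0 < θ * c + 1 - θ := by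
  obtain ⟨hθ0, hθ1⟩ := hθ
  rcases hθ0.eq_or_lt with rfl | hθ0
  · norm_num
  · nlinarith

theorem mul_splitRatio (hθ : θ ∈ Set.Icc (0 : ℝ) 1) (hc : 0 ≤ c) :
    (θ * c + 1 - θ) * splitRatio θ c = c := by
  rcases hc.eq_or_lt with rfl | hc
  · simp
  · exact mul_div_cancel₀ c (mul_add_one_sub_pos hθ hc).ne'

theorem splitRatio_monotoneOn (hθ : θ ∈ Set.Icc (0 : ℝ) 1) :
    MonotoneOn (splitRatio θ) (Set.Ici 0) := by
  intro d hd c hc hdc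
  rcases (Set.mem_Ici.mp hd).eq_or_lt with rfl | hd
  · have : 0 ≤ θ * c + 1 - θ := by nlinarith [hθ.1, hθ.2, Set.mem_Ici.mp hc]
    exact (splitRatio_zero_right θ).trans_le (div_nonneg hc this)
  · rw [splitRatio, splitRatio, div_le_div_iff₀ (mul_add_one_sub_pos hθ hd)
      (mul_add_one_sub_pos hθ (hd.trans_le hdc))]
    nlinarith [hθ.2]

theorem continuousOn_splitRatio (hc : 0 ≤ c) :
    ContinuousOn (fun θ => splitRatio θ c) (Set.Icc 0 1) := by
  rcases hc.eq_or_lt with rfl | hc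
  · simpa using continuousOn_const
  · exact continuousOn_const.div (by fun_prop) fun θ hθ => (mul_add_one_sub_pos hθ hc).ne'

end SplitRatio

section Split

variable {α : Type*} [Fintype α] [LinearOrder α] {P : α → ℝ} {θ : ℝ}

theorem splitV_eq (P : α → ℝ) (θ : ℝ) (i : α) :
    splitV P θ i = splitRatio θ (cdf P i) - splitRatio θ (cdfLt P i) := rfl

theorem cdf_splitV (P : α → ℝ) (θ : ℝ) (a : α) : cdf (splitV P θ) a = splitRatio θ (cdf P a) :=
  cdf_comp_sub P (splitRatio θ) (splitRatio_zero_right θ) a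

theorem cdfLt_splitV (P : α → ℝ) (θ : ℝ) (a : α) :
    cdfLt (splitV P θ) a = splitRatio θ (cdfLt P a) :=
  cdfLt_comp_sub P (splitRatio θ) (splitRatio_zero_right θ) a

theorem splitV_zero (P : α → ℝ) : splitV P 0 = P := by
  ext i
  simp [splitV_eq, cdf_eq_cdfLt_add]

theorem splitV_nonneg (hP : ∀ i, 0 ≤ P i) (hθ : θ ∈ Set.Icc (0 : ℝ) 1) (i : α) :
    0 ≤ splitV P θ i :=
  sub_nonneg.mpr <| splitRatio_monotoneOn hθ (cdfLt_nonneg hP i) (cdf_nonneg hP i)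
    (cdfLt_le_cdf hP i)

theorem isPMF_splitV [Nonempty α] (hP : IsPMF P) (hθ : θ ∈ Set.Icc (0 : ℝ) 1) :
    IsPMF (splitV P θ) := by
  obtain ⟨t, ht⟩ := Finite.exists_max (id : α → α)
  refine ⟨splitV_nonneg hP.1 hθ, ?_⟩
  rw [← cdf_of_forall_le _ ht, cdf_splitV, cdf_of_forall_le _ ht, hP.2, splitRatio_one_right]

theorem continuousOn_splitV (hP : ∀ i, 0 ≤ P i) (i : α) :
    ContinuousOn (fun θ => splitV P θ i) (Set.Icc 0 1) :=
  (continuousOn_splitRatio (cdf_nonneg hP i)).sub (continuousOn_splitRatio (cdfLt_nonneg hP i))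

/-- At `θ = 1`, `P_V` is the point mass at the least point of the support of `P`. -/
theorem exists_splitV_one_eq_one (hP : IsPMF P) : ∃ v, splitV P 1 v = 1 := by
  obtain ⟨i, -, hi⟩ : ∃ i ∈ Finset.univ, 0 < P i :=
    Finset.exists_lt_of_sum_lt (by simp [hP.2])
  obtain ⟨v, hv, hmin⟩ := wellFounded_lt.has_min {j | 0 < P j} ⟨i, hi⟩
  have hlt : cdfLt P v = 0 :=
    Finset.sum_eq_zero fun j hj =>
      (hP.1 j).antisymm' (not_lt.mp fun hPj => hmin j hPj (Finset.mem_filter.mp hj).2)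
  refine ⟨v, ?_⟩
  rw [splitV_eq, hlt, cdf_eq_cdfLt_add, hlt, zero_add, splitRatio_one_left (ne_of_gt hv),
    splitRatio_zero_right, sub_zero]

variable [OrderBot α]

theorem cdf_splitU (P : α → ℝ) (θ : ℝ) (a : α) :
    cdf (splitU P θ) a = θ * cdf P a + 1 - θ := by
  simp only [cdf, splitU, Finset.sum_add_distrib, ← Finset.mul_sum, Finset.sum_ite_eq',
    Finset.mem_filter, Finset.mem_univ, bot_le, and_self, if_true]
  ring

theorem cdfLt_splitU (P : α → ℝ) (θ : ℝ) {a : α} (ha : ⊥ < a) :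
    cdfLt (splitU P θ) a = θ * cdfLt P a + 1 - θ := by
  simp only [cdfLt, splitU, Finset.sum_add_distrib, ← Finset.mul_sum, Finset.sum_ite_eq',
    Finset.mem_filter, Finset.mem_univ, ha, and_self, if_true]
  ring

theorem splitU_zero_of_ne_bot (P : α → ℝ) {u : α} (hu : u ≠ ⊥) : splitU P 0 u = 0 := by
  simp [splitU, hu]

theorem isPMF_splitU (hP : IsPMF P) (hθ : θ ∈ Set.Icc (0 : ℝ) 1) :
    IsPMF (splitU P θ) := by
  obtain ⟨t, ht⟩ := Finite.exists_max (id : α → α)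
  refine ⟨fun i => add_nonneg (mul_nonneg hθ.1 (hP.1 i)) ?_, ?_⟩
  · split_ifs <;> linarith [hθ.2]
  · rw [← cdf_of_forall_le _ ht, cdf_splitU, cdf_of_forall_le _ ht, hP.2]
    ring

theorem cdf_splitU_mul_cdf_splitV (hP : ∀ i, 0 ≤ P i) (hθ : θ ∈ Set.Icc (0 : ℝ) 1) (a : α) :
    cdf (splitU P θ) a * cdf (splitV P θ) a = cdf P a := by
  rw [cdf_splitU, cdf_splitV, mul_splitRatio hθ (cdf_nonneg hP a)]

theorem cdfLt_splitU_mul_cdfLt_splitV (hP : ∀ i, 0 ≤ P i) (hθ : θ ∈ Set.Icc (0 : ℝ) 1)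
    (a : α) : cdfLt (splitU P θ) a * cdfLt (splitV P θ) a = cdfLt P a := by
  rcases eq_bot_or_bot_lt a with rfl | ha
  · simp [cdfLt_of_isMin _ isMin_bot]
  · rw [cdfLt_splitU P θ ha, cdfLt_splitV, mul_splitRatio hθ (cdfLt_nonneg hP a)]

end Split

theorem IsPMF.sum_ite_eq_one {α β : Type*} [Fintype α] {Q : α → ℝ} (hQ : IsPMF Q) {v₀ : α}
    (hv₀ : Q v₀ = 1) (g : α → β) : (∑ v, if g v = g v₀ then Q v else 0) = 1 := by
  refine le_antisymm ?_ ?_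
  · calc (∑ v, if g v = g v₀ then Q v else 0) ≤ ∑ v, Q v :=
          Finset.sum_le_sum fun v _ => by split_ifs <;> simp [hQ.1 v]
      _ = 1 := hQ.2
  · calc 1 = if g v₀ = g v₀ then Q v₀ else 0 := by simp [hv₀]
      _ ≤ ∑ v, if g v = g v₀ then Q v else 0 :=
          Finset.single_le_sum (f := fun v => if g v = g v₀ then Q v else 0)
            (fun v _ => by split_ifs <;> simp [hQ.1 v]) (Finset.mem_univ v₀)

end QIT

open QIT in
/-- Existence of classical splits: a family `(P_U^θ, P_V^θ, f)` such that
(1) `f(U,V) ∼ P_A` for independent `U ∼ P_U^θ`, `V ∼ P_V^θ`; (2) the conditional probability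
`P^θ_{f(U,V)|U}(a|u)` is continuous in `θ`; (3) at `θ = 0` it equals `P_A(a)` (for `u` in the
support of `P_U^0`); (4) at `θ = 1` it is a point mass for every `u`.  In particular, the
explicit choice `F_U^θ = θF_A + 1 − θ`, `F_V^θ = F_A/F_U^θ`, `f = max` works. -/
theorem exists_classical_split
    {α : Type*} [Fintype α] [LinearOrder α] [OrderBot α]
    (P : α → ℝ) (hP : IsPMF P) :
    ∃ (PU PV : ℝ → α → ℝ) (f : α → α → α),
      (∀ θ ∈ Set.Icc (0:ℝ) 1, IsPMF (PU θ) ∧ IsPMF (PV θ)) ∧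
      -- (1) f(U,V) ∼ P_A
      (∀ θ ∈ Set.Icc (0:ℝ) 1, ∀ a : α,
        (∑ p : α × α, if f p.1 p.2 = a then PU θ p.1 * PV θ p.2 else 0) = P a) ∧
      -- (2) continuity of the conditional probability in θ
      (∀ (a u : α),
        ContinuousOn (fun θ => ∑ v, if f u v = a then PV θ v else 0) (Set.Icc (0:ℝ) 1)) ∧
      -- (3) at θ = 0 the conditional distribution is P_A
      (∀ (a u : α), 0 < PU 0 u →
        (∑ v, if f u v = a then PV 0 v else 0) = P a) ∧
      -- (4) at θ = 1 the conditional distribution is a point mass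
      (∀ u : α, ∃ a : α, (∑ v, if f u v = a then PV 1 v else 0) = 1) ∧
      -- the explicit construction realises all of the above
      PU = splitU P ∧ PV = splitV P ∧ f = (fun u v => max u v) := by
  refine ⟨splitU P, splitV P, fun u v => max u v,
    fun θ hθ => ⟨isPMF_splitU hP hθ, isPMF_splitV hP hθ⟩, ?_, ?_, ?_, ?_, rfl, rfl, rfl⟩
  · intro θ hθ a
    rw [sum_ite_max_eq, cdf_splitU_mul_cdf_splitV hP.1 hθ,
      cdfLt_splitU_mul_cdfLt_splitV hP.1 hθ, cdf_eq_cdfLt_add, add_sub_cancel_left]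
  · intro a u
    refine continuousOn_finsetSum _ fun v _ => ?_
    split_ifs
    exacts [continuousOn_splitV hP.1 v, continuousOn_const]
  · intro a u hu
    obtain rfl : u = ⊥ := by_contra fun h => hu.ne' (splitU_zero_of_ne_bot P h)
    simp [splitV_zero]
  · intro u
    obtain ⟨v₀, hv₀⟩ := exists_splitV_one_eq_one hP
    exact ⟨max u v₀, (isPMF_splitV hP ⟨zero_le_one, le_rfl⟩).sum_ite_eq_one hv₀ _⟩
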